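/- arXiv:2206.12308 — 3 statements merged into one kernel-verified Lean document; each statement's English description precedes it below -/
import Mathlib

section
/- If (q,t) ∈ Λ_f with 0 ≤ t < f(q) and π(q,t) = z with z ∈ V, then t = 0 and q = Q(z). -/
open Set Topology

/-- A topological flow. -/
structure IsFlow (X : Type*) [TopologicalSpace X] (φ : ℝ → X → X) : Prop where
  cont : Continuous fun p : X × ℝ => φ p.2 p.1
  map_zero : ∀ x : X, φ 0 x = x
  map_add : ∀ s t : ℝ, ∀ x : X, φ (s + t) x = φ s (φ t x)

variable {X : Type*}

/-- `Φ_L(A) = {Φ_t(x) : t ∈ L, x ∈ A}`. -/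
def flowSet (φ : ℝ → X → X) (L : Set ℝ) (A : Set X) : Set X :=
  {y | ∃ t ∈ L, ∃ x ∈ A, φ t x = y}

/-- A cross-section of injectivity time `η > 0`. -/
def IsCrossSection (φ : ℝ → X → X) (η : ℝ) (S : Set X) : Prop :=
  0 < η ∧ Set.InjOn (fun p : X × ℝ => φ p.2 p.1) (S ×ˢ Set.Icc (-η) η)

/-- The flow interior (taking `γ = η/2`). -/
def flowInterior [TopologicalSpace X] (φ : ℝ → X → X) (η : ℝ) (U : Set X) : Set X :=
  interior (flowSet φ (Set.Icc (-(η / 2)) (η / 2)) U) ∩ U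

/-- The flow boundary. -/
def flowBoundary [TopologicalSpace X] (φ : ℝ → X → X) (η : ℝ) (U : Set X) : Set X :=
  closure U \ flowInterior φ η U

/-- `t` is a return-time sequence for `(x, q)`. -/
def IsRetSeq {N : ℕ} (φ : ℝ → X → X) (S : Fin N → Set X) (β α : ℝ)
    (x : X) (q : ℤ → Fin N) (t : ℤ → ℝ) : Prop :=
  t 0 = 0 ∧ (∀ i : ℤ, β ≤ t (i + 1) - t i ∧ t (i + 1) - t i ≤ α) ∧
    ∀ i : ℤ, φ (t i) x ∈ S (q i)

/-- The set `G ⋊ Σ^ℤ`. -/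
def GJoin {N : ℕ} (φ : ℝ → X → X) (S : Fin N → Set X) (β α : ℝ) :
    Set (X × (ℤ → Fin N)) :=
  {p | p.1 ∈ ⋃ i, S i ∧ ∃ t : ℤ → ℝ, IsRetSeq φ S β α p.1 p.2 t}

/-- First positive hitting time of `T` (`r₁` when `T = G`). -/
noncomputable def hitT (φ : ℝ → X → X) (T : Set X) (x : X) : ℝ :=
  sInf {t : ℝ | 0 < t ∧ φ t x ∈ T}

/-- Last negative hitting time of `T`. -/
noncomputable def hitTNeg (φ : ℝ → X → X) (T : Set X) (x : X) : ℝ :=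
  sSup {t : ℝ | t < 0 ∧ φ t x ∈ T}

/-- Forward return times: `r_0 = 0`, `r_{n+1}(x) = r_n(x) + r_1(Φ_{r_n(x)}(x))`. -/
noncomputable def retPos (φ : ℝ → X → X) (G : Set X) : ℕ → X → ℝ
  | 0 => fun _ => 0
  | n + 1 => fun x => retPos φ G n x + hitT φ G (φ (retPos φ G n x) x)

/-- Backward return times, defined analogously with negative hitting times. -/
noncomputable def retNeg (φ : ℝ → X → X) (G : Set X) : ℕ → X → ℝ
  | 0 => fun _ => 0
  | n + 1 => fun x => retNeg φ G n x + hitTNeg φ G (φ (retNeg φ G n x) x)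

/-- The `i`-th return time `r_i(x)`, `i ∈ ℤ`. -/
noncomputable def retZ (φ : ℝ → X → X) (G : Set X) (i : ℤ) (x : X) : ℝ :=
  if 0 ≤ i then retPos φ G i.toNat x else retNeg φ G (-i).toNat x

/-- `Z = ∪ᵢ ∂^Φ(Sᵢ)`. -/
def Zbd [TopologicalSpace X] {N : ℕ} (φ : ℝ → X → X) (S : Fin N → Set X) (η : ℝ) : Set X :=
  ⋃ i, flowBoundary φ η (S i)

/-- `W = X \ ∪_{r ∈ ℝ} Φ_r(Z)`. -/
def Wset [TopologicalSpace X] {N : ℕ} (φ : ℝ → X → X) (S : Fin N → Set X) (η : ℝ) : Set X :=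
  (⋃ r : ℝ, (fun z => φ r z) '' Zbd φ S η)ᶜ

/-- `V = W ∩ G`. -/
def Vset [TopologicalSpace X] {N : ℕ} (φ : ℝ → X → X) (S : Fin N → Set X) (η : ℝ) : Set X :=
  Wset φ S η ∩ ⋃ i, S i

/-- The itinerary map `Q : V → Σ^ℤ`, `Q_i(x) = j` iff `Φ_{r_i(x)}(x) ∈ S_j` (the sets `S_j`
being pairwise disjoint, such `j` is unique on `V`; junk value otherwise). -/
noncomputable def Qseq {N : ℕ} (φ : ℝ → X → X) (S : Fin N → Set X) (hN : 0 < N)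
    (x : X) : ℤ → Fin N := fun i =>
  @dite _ (∃ j : Fin N, φ (retZ φ (⋃ k, S k) i x) x ∈ S j) (Classical.dec _)
    (fun h => h.choose) (fun _ => ⟨0, hN⟩)

/-- `P : Λ → G` sends `q` to the unique `x` with `(x, q) ∈ G ⋊ Σ^ℤ`. -/
noncomputable def Pmap {N : ℕ} [Nonempty X] (φ : ℝ → X → X) (S : Fin N → Set X)
    (β α : ℝ) (q : ℤ → Fin N) : X :=
  @dite _ (∃ x : X, (x, q) ∈ GJoin φ S β α) (Classical.dec _)
    (fun h => h.choose) (fun _ => Classical.arbitrary X)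

/-- The roof function `f(q) = t₁` where `t` is the return-time sequence of `(P(q), q)`. -/
noncomputable def fmap {N : ℕ} [Nonempty X] (φ : ℝ → X → X) (S : Fin N → Set X)
    (β α : ℝ) (q : ℤ → Fin N) : ℝ :=
  @dite _ (∃ t : ℤ → ℝ, IsRetSeq φ S β α (Pmap φ S β α q) q t) (Classical.dec _)
    (fun h => h.choose 1) (fun _ => 0)


/-! The hit times of `G` along any orbit form a `β`-separated set meeting every interval of
length `α`, so the canonical return times `r_i(x)` of `x ∈ G` enumerate all of them and `Q(x)`
is the itinerary read along this enumeration.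

Let `q ∈ closure (Q V)` and let `τ` be the return-time sequence of `(P q, q)`. Limits of the
triples `(y, Q y, r(y))`, `y ∈ V`, are again point–itinerary–return-time triples; by
compactness one of them has itinerary `q`, and by expansivity and the injectivity of the
sections it is `(P q, q, τ)`. If `P q ∈ W`, every hit of `G` along its orbit lies in the flow
interior of its section, so it persists along the approximating orbits, where all hits are
enumerated by `r(y)`; in the limit it is one of the `τ_i`. Hence `τ` enumerates every hit of
`P q`: the hit `t ∈ [0, τ₁)` is `τ₀ = 0`, and `τ = r(z)`, whence `q = Q(z)`. -/

open Filter

section Flow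

variable [TopologicalSpace X] {φ : ℝ → X → X}

theorem IsFlow.map_map (hφ : IsFlow X φ) (s t : ℝ) (x : X) : φ s (φ t x) = φ (s + t) x :=
  (hφ.map_add s t x).symm

theorem IsFlow.map_neg_map (hφ : IsFlow X φ) (t : ℝ) (x : X) : φ (-t) (φ t x) = x := by
  rw [hφ.map_map, neg_add_cancel, hφ.map_zero]

theorem IsFlow.continuous_comp {Y : Type*} [TopologicalSpace Y] (hφ : IsFlow X φ) {f : Y → ℝ}
    {g : Y → X} (hf : Continuous f) (hg : Continuous g) : Continuous fun y => φ (f y) (g y) :=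
  hφ.cont.comp (hg.prodMk hf)

theorem IsFlow.tendsto_comp {ι : Type*} (hφ : IsFlow X φ) {l : Filter ι} {f : ι → ℝ}
    {g : ι → X} {t : ℝ} {x : X} (hf : Tendsto f l (𝓝 t)) (hg : Tendsto g l (𝓝 x)) :
    Tendsto (fun n => φ (f n) (g n)) l (𝓝 (φ t x)) :=
  (hφ.cont.tendsto (x, t)).comp (hg.prodMk_nhds hf)

end Flow

namespace IsCrossSection

variable [TopologicalSpace X] {φ : ℝ → X → X} {η : ℝ} {S : Set X}

theorem eq_of_mem (hS : IsCrossSection φ η S) (hφ : IsFlow X φ) {y : X} {s t : ℝ}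
    (hs : φ s y ∈ S) (ht : φ t y ∈ S) (hst : |t - s| ≤ η) : s = t := by
  have key := hS.2 (show (φ s y, t - s) ∈ S ×ˢ Icc (-η) η from ⟨hs, abs_le.1 hst⟩)
    (show (φ t y, (0 : ℝ)) ∈ S ×ˢ Icc (-η) η from ⟨ht, by simp [hS.1.le]⟩)
    (by simp [hφ.map_map])
  linarith [congrArg Prod.snd key]

variable [CompactSpace X] [T2Space X]

/-- On a compact space `(p, v) ↦ φ v p` is an embedding of `S × [-η/2, η/2]`, so flow times
can be read off continuously. -/
theorem tendsto_time_nhds_zero (hS : IsCrossSection φ η S) (hφ : IsFlow X φ) (hSc : IsClosed S)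
    {ι : Type*} {l : Filter ι} {a : ι → X} {v : ι → ℝ} (ha : ∀ n, a n ∈ S)
    (hv : ∀ n, v n ∈ Icc (-(η / 2)) (η / 2)) {p : X} (hp : p ∈ S)
    (h : Tendsto (fun n => φ (v n) (a n)) l (𝓝 p)) : Tendsto v l (𝓝 0) := by
  set K := S ×ˢ Icc (-(η / 2)) (η / 2)
  have : CompactSpace K := isCompact_iff_compactSpace.1 (hSc.isCompact.prod isCompact_Icc)
  have hη := hS.1
  have hsub : Icc (-(η / 2)) (η / 2) ⊆ Icc (-η) η :=
    Icc_subset_Icc (by linarith) (by linarith)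
  have hemb : IsEmbedding fun k : K => φ k.1.2 k.1.1 :=
    (Continuous.isClosedEmbedding (hφ.continuous_comp (by fun_prop) (by fun_prop))
      fun k k' hkk' => Subtype.ext <|
        hS.2 ⟨k.2.1, hsub k.2.2⟩ ⟨k'.2.1, hsub k'.2.2⟩ hkk').isEmbedding
  have hp0 : ((p, 0) : X × ℝ) ∈ K := ⟨hp, by constructor <;> linarith⟩
  have hK := (hemb.tendsto_nhds_iff (f := fun n => (⟨(a n, v n), ha n, hv n⟩ : K))
    (y := ⟨_, hp0⟩)).2 (by simpa [Function.comp_def, hφ.map_zero] using h)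
  exact ((continuous_snd.comp continuous_subtype_val).tendsto _).comp hK

theorem exists_tendsto_zero_map_mem (hS : IsCrossSection φ η S) (hφ : IsFlow X φ)
    (hSc : IsClosed S) {p : X} (hp : p ∈ S)
    (hint : p ∈ interior (flowSet φ (Icc (-(η / 2)) (η / 2)) S))
    {ι : Type*} {l : Filter ι} {y : ι → X} (hy : Tendsto y l (𝓝 p)) :
    ∃ v : ι → ℝ, Tendsto v l (𝓝 0) ∧ ∀ᶠ n in l, φ (-v n) (y n) ∈ S := by
  have hη := hS.1
  have : ∀ n, ∃ a ∈ S, ∃ v ∈ Icc (-(η / 2)) (η / 2),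
      y n ∈ flowSet φ (Icc (-(η / 2)) (η / 2)) S → φ v a = y n := by
    intro n
    by_cases hn : y n ∈ flowSet φ (Icc (-(η / 2)) (η / 2)) S
    · obtain ⟨v, hv, a, ha, hva⟩ := hn
      exact ⟨a, ha, v, hv, fun _ => hva⟩
    · exact ⟨p, hp, 0, ⟨by linarith, by linarith⟩, fun h => absurd h hn⟩
  choose a ha v hv hav using this
  have hev : ∀ᶠ n in l, φ (v n) (a n) = y n :=
    (hy.eventually_mem (isOpen_interior.mem_nhds hint)).mono fun n hn =>
      hav n (interior_subset hn)
  refine ⟨v, hS.tendsto_time_nhds_zero hφ hSc ha hv hp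
    (hy.congr' (hev.mono fun n hn => hn.symm)), hev.mono fun n hn => ?_⟩
  rw [← hn, hφ.map_neg_map]
  exact ha n

end IsCrossSection

section IntSeq

variable {ρ : ℤ → ℝ} {β α : ℝ}

theorem sub_mul_le_sub_of_forall_le_sub_succ (hgap : ∀ i, β ≤ ρ (i + 1) - ρ i) {i j : ℤ}
    (hij : i ≤ j) : (j - i) * β ≤ ρ j - ρ i := by
  induction j, hij using Int.leInduction with
  | base => simp
  | succ k _ ih => push_cast; linarith [hgap k]

theorem tendsto_atTop_of_forall_le_sub_succ (hβ : 0 < β)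
    (hgap : ∀ i, β ≤ ρ (i + 1) - ρ i) : Tendsto ρ atTop atTop := by
  refine tendsto_atTop_mono' _ ?_ (tendsto_atTop_add_const_left _ (ρ 0)
    (tendsto_intCast_atTop_atTop.atTop_mul_const hβ))
  filter_upwards [eventually_ge_atTop 0] with i hi
  have := sub_mul_le_sub_of_forall_le_sub_succ hgap hi
  push_cast at this
  linarith

theorem tendsto_atBot_of_forall_le_sub_succ (hβ : 0 < β)
    (hgap : ∀ i, β ≤ ρ (i + 1) - ρ i) : Tendsto ρ atBot atBot := by
  refine tendsto_atBot_mono' _ ?_ (tendsto_atBot_add_const_left _ (ρ 0)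
    ((tendsto_intCast_atBot_iff.2 tendsto_id).atBot_mul_const hβ))
  filter_upwards [eventually_le_atBot 0] with i hi
  have := sub_mul_le_sub_of_forall_le_sub_succ hgap hi
  simp only [Int.cast_zero, id] at this ⊢
  linarith

theorem exists_le_lt_succ_of_forall_le_sub_succ (hβ : 0 < β)
    (hgap : ∀ i, β ≤ ρ (i + 1) - ρ i) (s : ℝ) : ∃ i, ρ i ≤ s ∧ s < ρ (i + 1) := by
  obtain ⟨b, hb⟩ :=
    eventually_atTop.1 ((tendsto_atTop_of_forall_le_sub_succ hβ hgap).eventually_gt_atTop s)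
  obtain ⟨a, ha⟩ :=
    eventually_atBot.1 ((tendsto_atBot_of_forall_le_sub_succ hβ hgap).eventually_le_atBot s)
  obtain ⟨i, hi, hmax⟩ := Int.exists_greatest_of_bdd
    ⟨b, fun i hi => le_of_not_gt fun hbi => (hb i hbi.le).not_ge hi⟩ ⟨a, ha a le_rfl⟩
  exact ⟨i, hi, lt_of_not_ge fun h => by linarith [hmax _ h]⟩

theorem abs_le_mul_of_forall_abs_sub_succ_le (h0 : ρ 0 = 0) (h : ∀ i, |ρ (i + 1) - ρ i| ≤ α)
    (i : ℤ) : |ρ i| ≤ |(i : ℝ)| * α := by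
  induction i with
  | zero => simp [h0]
  | succ n ih =>
    have := abs_sub_abs_le_abs_sub (ρ (n + 1)) (ρ n)
    push_cast at ih ⊢
    rw [abs_of_nonneg (by positivity : (0 : ℝ) ≤ n + 1)]
    rw [abs_of_nonneg (by positivity : (0 : ℝ) ≤ n)] at ih
    linarith [h n]
  | pred n ih =>
    have := abs_sub_abs_le_abs_sub (ρ (-n - 1)) (ρ (-n))
    have hn := h (-n - 1)
    rw [sub_add_cancel, abs_sub_comm] at hn
    push_cast at ih ⊢
    rw [abs_of_nonpos (by linarith [(Nat.cast_nonneg n : (0 : ℝ) ≤ n)] : (-n - 1 : ℝ) ≤ 0)]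
    rw [abs_of_nonpos (by simp : (-n : ℝ) ≤ 0)] at ih
    linarith

theorem StrictMono.eq_of_range_eq {γ : Type*} [LinearOrder γ] {f g : ℤ → γ}
    (hf : StrictMono f) (hg : StrictMono g) (hfg : range f = range g) (h0 : f 0 = g 0) :
    f = g := by
  have step : ∀ {f g : ℤ → γ}, StrictMono f → StrictMono g → range f ⊆ range g →
      ∀ i, f i = g i → g (i + 1) ≤ f (i + 1) ∧ f (i - 1) ≤ g (i - 1) := by
    intro f g hf hg hfg i hi
    obtain ⟨m, hm⟩ := hfg ⟨i + 1, rfl⟩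
    obtain ⟨m', hm'⟩ := hfg ⟨i - 1, rfl⟩
    have h1 : i < m := hg.lt_iff_lt.1 (by rw [hm, ← hi]; exact hf (lt_add_one i))
    have h2 : m' < i := hg.lt_iff_lt.1 (by rw [hm', ← hi]; exact hf (sub_one_lt i))
    exact ⟨hm ▸ hg.monotone (by omega), hm' ▸ hg.monotone (by omega)⟩
  funext i
  induction i with
  | zero => exact h0
  | succ n ih => exact le_antisymm (step hg hf hfg.ge _ ih.symm).1 (step hf hg hfg.le _ ih).1
  | pred n ih => exact le_antisymm (step hf hg hfg.le _ ih).2 (step hg hf hfg.ge _ ih.symm).2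

end IntSeq

theorem IsGreatest.isLeast_Ioi_inter {γ : Type*} [LinearOrder γ] {H : Set γ} {a b : γ}
    (h : IsGreatest (Iio b ∩ H) a) (hb : b ∈ H) : IsLeast (Ioi a ∩ H) b :=
  ⟨⟨h.1.1, hb⟩, fun _ ht => le_of_not_gt fun htb => (h.2 ⟨htb, ht.2⟩).not_gt ht.1⟩

structure IsDelone (β α : ℝ) (H : Set ℝ) : Prop where
  lt_sub : ∀ s ∈ H, ∀ t ∈ H, s < t → β < t - s
  exists_mem_Icc_sub : ∀ s, ∃ h ∈ H, h ∈ Icc (s - α) s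
  exists_mem_Icc_add : ∀ s, ∃ h ∈ H, h ∈ Icc s (s + α)

namespace IsDelone

variable {β α a b : ℝ} {H : Set ℝ}

theorem isClosed (hH : IsDelone β α H) (hβ : 0 < β) : IsClosed H := by
  refine Metric.isClosed_of_pairwise_le_dist hβ fun s hs t ht hst => ?_
  rcases hst.lt_or_gt with h | h
  · rw [Real.dist_eq, abs_sub_comm, abs_of_pos (sub_pos.2 h)]
    exact (hH.lt_sub s hs t ht h).le
  · rw [Real.dist_eq, abs_of_pos (sub_pos.2 h)]
    exact (hH.lt_sub t ht s hs h).le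

theorem neg (hH : IsDelone β α H) : IsDelone β α (-H) where
  lt_sub s hs t ht hst := by linarith [hH.lt_sub (-t) ht (-s) hs (neg_lt_neg hst)]
  exists_mem_Icc_sub s := by
    obtain ⟨h, hh, h1, h2⟩ := hH.exists_mem_Icc_add (-s)
    exact ⟨-h, by simpa using hh, by linarith, by linarith⟩
  exists_mem_Icc_add s := by
    obtain ⟨h, hh, h1, h2⟩ := hH.exists_mem_Icc_sub (-s)
    exact ⟨-h, by simpa using hh, by linarith, by linarith⟩

theorem exists_isLeast (hH : IsDelone β α H) (hβ : 0 < β) (ha : a ∈ H) :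
    ∃ b, IsLeast (Ioi a ∩ H) b := by
  have hB : Ioi a ∩ H = Ici (a + β) ∩ H := by
    ext t
    refine ⟨fun ⟨hat, ht⟩ => ⟨?_, ht⟩, fun ⟨hat, ht⟩ => ⟨?_, ht⟩⟩
    · exact mem_Ici.2 (by linarith [hH.lt_sub a ha t ht hat])
    · exact mem_Ioi.2 (by linarith [mem_Ici.1 hat])
  obtain ⟨h, hh, h1, -⟩ := hH.exists_mem_Icc_sub (a + β + α)
  rw [hB]
  exact ⟨_, (isClosed_Ici.inter (hH.isClosed hβ)).isLeast_csInf ⟨h, by simpa using h1, hh⟩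
    ⟨a + β, fun t ht => ht.1⟩⟩

theorem exists_isGreatest (hH : IsDelone β α H) (hβ : 0 < β) (ha : a ∈ H) :
    ∃ b, IsGreatest (Iio a ∩ H) b := by
  obtain ⟨b, hb⟩ := hH.neg.exists_isLeast hβ (a := -a) (by simpa using ha)
  refine ⟨-b, ⟨mem_Iio.2 (by linarith [mem_Ioi.1 hb.1.1]), hb.1.2⟩, fun t ht => ?_⟩
  linarith [hb.2 ⟨neg_lt_neg (mem_Iio.1 ht.1), by simpa using ht.2⟩]

theorem sub_le_of_isLeast (hH : IsDelone β α H) (hb : IsLeast (Ioi a ∩ H) b) :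
    b - a ≤ α := by
  by_contra! hlt
  obtain ⟨h, hh, h1, h2⟩ := hH.exists_mem_Icc_sub ((a + α + b) / 2)
  linarith [hb.2 ⟨show a < h by linarith, hh⟩]

theorem range_eq_of_isLeast (hH : IsDelone β α H) (hβ : 0 < β) {ρ : ℤ → ℝ}
    (hρ : ∀ i, IsLeast (Ioi (ρ i) ∩ H) (ρ (i + 1))) : range ρ = H := by
  have hmem : ∀ i, ρ i ∈ H := fun i => by simpa using (hρ (i - 1)).1.2
  have hgap : ∀ i, β ≤ ρ (i + 1) - ρ i := fun i =>
    (hH.lt_sub _ (hmem i) _ (hmem (i + 1)) (hρ i).1.1).le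
  refine Subset.antisymm (range_subset_iff.2 hmem) fun s hs => ?_
  obtain ⟨i, hi, hi'⟩ := exists_le_lt_succ_of_forall_le_sub_succ hβ hgap s
  rcases hi.eq_or_lt with h | h
  · exact ⟨i, h⟩
  · exact absurd ((hρ i).2 ⟨h, hs⟩) (not_le.2 hi')

end IsDelone

def hitTimes (φ : ℝ → X → X) (G : Set X) (x : X) : Set ℝ :=
  {t | φ t x ∈ G}

section Returns

variable {φ : ℝ → X → X} {G : Set X} {x : X}

theorem retZ_natCast (n : ℕ) : retZ φ G n x = retPos φ G n x := by
  simp [retZ]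

theorem retZ_neg_natCast (n : ℕ) : retZ φ G (-n) x = retNeg φ G n x := by
  cases n with
  | zero => simp [retZ, retPos, retNeg]
  | succ n => simp [retZ]; omega

theorem retZ_zero : retZ φ G 0 x = 0 := by
  simp [retZ, retPos]

variable {N : ℕ} {S : Fin N → Set X}

theorem mem_Qseq (hN : 0 < N) {i : ℤ} (h : φ (retZ φ (⋃ k, S k) i x) x ∈ ⋃ k, S k) :
    φ (retZ φ (⋃ k, S k) i x) x ∈ S (Qseq φ S hN x i) := by
  have h' := mem_iUnion.1 h
  simp only [Qseq, dif_pos h']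
  exact h'.choose_spec

theorem Qseq_eq (hN : 0 < N) (hdisj : Pairwise (Function.onFun Disjoint S)) {q : ℤ → Fin N}
    (h : ∀ i, φ (retZ φ (⋃ k, S k) i x) x ∈ S (q i)) : Qseq φ S hN x = q := by
  funext i
  by_contra hne
  exact Set.disjoint_left.1 (hdisj hne) (mem_Qseq hN (mem_iUnion.2 ⟨_, h i⟩)) (h i)

end Returns

section HitTimes

variable [TopologicalSpace X] {φ : ℝ → X → X} {G : Set X} {x : X} {β α : ℝ}

theorem IsFlow.exists_sub_mem_hitTimes (hφ : IsFlow X φ) {L : Set ℝ} {s : ℝ}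
    (h : φ s x ∈ flowSet φ L G) : ∃ u ∈ L, s - u ∈ hitTimes φ G x := by
  obtain ⟨u, hu, g, hg, hgs⟩ := h
  refine ⟨u, hu, ?_⟩
  show φ (s - u) x ∈ G
  rw [sub_eq_neg_add, ← hφ.map_map, ← hgs, hφ.map_neg_map]
  exact hg

theorem hitTimes_isDelone {N : ℕ} {S : Fin N → Set X} {η : ℝ} (hφ : IsFlow X φ)
    (hcs : ∀ i, IsCrossSection φ η (S i)) (hβα : β ≤ α) (hαη : α < η)
    (hβdisj : Pairwise (Function.onFun Disjoint fun i => flowSet φ (Icc 0 β) (S i)))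
    (hcov₁ : flowSet φ (Icc 0 α) (⋃ i, S i) = univ)
    (hcov₂ : flowSet φ (Icc (-α) 0) (⋃ i, S i) = univ) (x : X) :
    IsDelone β α (hitTimes φ (⋃ i, S i) x) where
  lt_sub s hs t ht hst := by
    by_contra! hle
    obtain ⟨k, hk⟩ := mem_iUnion.1 hs
    obtain ⟨l, hl⟩ := mem_iUnion.1 ht
    obtain rfl : k = l := by
      by_contra hne
      refine Set.disjoint_left.1 (hβdisj hne)
        ⟨t - s, ⟨by linarith, hle⟩, _, hk, by rw [hφ.map_map, sub_add_cancel]⟩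
        ⟨0, ⟨le_rfl, by linarith⟩, _, hl, hφ.map_zero _⟩
    have := (hcs k).eq_of_mem hφ hk hl (by rw [abs_of_pos (sub_pos.2 hst)]; linarith)
    linarith
  exists_mem_Icc_sub s := by
    obtain ⟨u, hu, hsu⟩ := hφ.exists_sub_mem_hitTimes (hcov₁.ge (mem_univ (φ s x)))
    exact ⟨s - u, hsu, by linarith [hu.2], by linarith [hu.1]⟩
  exists_mem_Icc_add s := by
    obtain ⟨u, hu, hsu⟩ := hφ.exists_sub_mem_hitTimes (hcov₂.ge (mem_univ (φ s x)))
    exact ⟨s - u, hsu, by linarith [hu.2], by linarith [hu.1]⟩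

theorem IsFlow.hitT_map_eq (hφ : IsFlow X φ) {r b : ℝ}
    (h : IsLeast (Ioi r ∩ hitTimes φ G x) b) : hitT φ G (φ r x) = b - r := by
  refine IsLeast.csInf_eq ⟨⟨sub_pos.2 h.1.1, ?_⟩, fun t ht => ?_⟩
  · rw [hφ.map_map, sub_add_cancel]
    exact h.1.2
  · have := h.2 ⟨show r < t + r by linarith [ht.1], show φ (t + r) x ∈ G by
      rw [← hφ.map_map]; exact ht.2⟩
    linarith

theorem IsFlow.hitTNeg_map_eq (hφ : IsFlow X φ) {r b : ℝ}
    (h : IsGreatest (Iio r ∩ hitTimes φ G x) b) : hitTNeg φ G (φ r x) = b - r := by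
  refine IsGreatest.csSup_eq ⟨⟨sub_neg.2 h.1.1, ?_⟩, fun t ht => ?_⟩
  · rw [hφ.map_map, sub_add_cancel]
    exact h.1.2
  · have := h.2 ⟨show t + r < r by linarith [ht.1], show φ (t + r) x ∈ G by
      rw [← hφ.map_map]; exact ht.2⟩
    linarith

theorem IsFlow.isLeast_retPos (hφ : IsFlow X φ) (hH : IsDelone β α (hitTimes φ G x))
    (hβ : 0 < β) (hx : x ∈ G) (n : ℕ) :
    IsLeast (Ioi (retPos φ G n x) ∩ hitTimes φ G x) (retPos φ G (n + 1) x) := by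
  have step : ∀ n, retPos φ G n x ∈ hitTimes φ G x →
      IsLeast (Ioi (retPos φ G n x) ∩ hitTimes φ G x) (retPos φ G (n + 1) x) := by
    intro n hn
    obtain ⟨b, hb⟩ := hH.exists_isLeast hβ hn
    simpa only [retPos, hφ.hitT_map_eq hb, add_sub_cancel] using hb
  refine step n ?_
  induction n with
  | zero => simpa [retPos, hitTimes, hφ.map_zero] using hx
  | succ n ih => exact (step n ih).1.2

theorem IsFlow.isLeast_retNeg (hφ : IsFlow X φ) (hH : IsDelone β α (hitTimes φ G x))
    (hβ : 0 < β) (hx : x ∈ G) (n : ℕ) :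
    IsLeast (Ioi (retNeg φ G (n + 1) x) ∩ hitTimes φ G x) (retNeg φ G n x) := by
  have step : ∀ n, retNeg φ G n x ∈ hitTimes φ G x →
      IsGreatest (Iio (retNeg φ G n x) ∩ hitTimes φ G x) (retNeg φ G (n + 1) x) := by
    intro n hn
    obtain ⟨b, hb⟩ := hH.exists_isGreatest hβ hn
    simpa only [retNeg, hφ.hitTNeg_map_eq hb, add_sub_cancel] using hb
  have hmem : ∀ n, retNeg φ G n x ∈ hitTimes φ G x := by
    intro n
    induction n with
    | zero => simpa [retNeg, hitTimes, hφ.map_zero] using hx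
    | succ n ih => exact (step n ih).1.2
  exact (step n (hmem n)).isLeast_Ioi_inter (hmem n)

theorem IsFlow.isLeast_retZ (hφ : IsFlow X φ) (hH : IsDelone β α (hitTimes φ G x))
    (hβ : 0 < β) (hx : x ∈ G) (i : ℤ) :
    IsLeast (Ioi (retZ φ G i x) ∩ hitTimes φ G x) (retZ φ G (i + 1) x) := by
  rcases le_or_gt 0 i with hi | hi
  · lift i to ℕ using hi
    rw [retZ_natCast, ← Nat.cast_succ, retZ_natCast]
    exact hφ.isLeast_retPos hH hβ hx i
  · obtain ⟨n, rfl⟩ : ∃ n : ℕ, i = -(n + 1 : ℕ) := ⟨(-i - 1).toNat, by omega⟩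
    rw [show -((n + 1 : ℕ) : ℤ) + 1 = -(n : ℤ) by push_cast; ring, retZ_neg_natCast,
      retZ_neg_natCast]
    exact hφ.isLeast_retNeg hH hβ hx n

theorem IsFlow.range_retZ (hφ : IsFlow X φ) (hH : IsDelone β α (hitTimes φ G x))
    (hβ : 0 < β) (hx : x ∈ G) : range (fun i => retZ φ G i x) = hitTimes φ G x :=
  hH.range_eq_of_isLeast hβ (hφ.isLeast_retZ hH hβ hx)

theorem IsFlow.strictMono_retZ (hφ : IsFlow X φ) (hH : IsDelone β α (hitTimes φ G x))
    (hβ : 0 < β) (hx : x ∈ G) : StrictMono fun i => retZ φ G i x :=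
  strictMono_int_of_lt_succ fun i => (hφ.isLeast_retZ hH hβ hx i).1.1

theorem IsFlow.isRetSeq_Qseq {N : ℕ} {S : Fin N → Set X} (hN : 0 < N) (hφ : IsFlow X φ)
    (hH : IsDelone β α (hitTimes φ (⋃ k, S k) x)) (hβ : 0 < β) (hx : x ∈ ⋃ k, S k) :
    IsRetSeq φ S β α x (Qseq φ S hN x) fun i => retZ φ (⋃ k, S k) i x := by
  have hmem : ∀ i, retZ φ (⋃ k, S k) i x ∈ hitTimes φ (⋃ k, S k) x := fun i => by
    rw [← hφ.range_retZ hH hβ hx]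
    exact mem_range_self i
  refine ⟨retZ_zero, fun i => ⟨?_, hH.sub_le_of_isLeast (hφ.isLeast_retZ hH hβ hx i)⟩,
    fun i => mem_Qseq hN (hmem i)⟩
  exact (hH.lt_sub _ (hmem i) _ (hmem (i + 1)) (hφ.isLeast_retZ hH hβ hx i).1.1).le

end HitTimes

def IsExpansivityConstant [MetricSpace X] (φ : ℝ → X → X) (η α : ℝ) : Prop :=
  ∀ (t u : ℤ → ℝ) (x y : X), t 0 = 0 → u 0 = 0 →
    (∀ i : ℤ, 0 < t (i + 1) - t i ∧ t (i + 1) - t i ≤ α) →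
    (∀ i : ℤ, |u (i + 1) - u i| ≤ α) →
    Tendsto (fun n : ℕ => t (n : ℤ)) atTop atTop →
    Tendsto (fun n : ℕ => t (-(n : ℤ))) atTop atBot →
    (∀ i : ℤ, dist (φ (t i) x) (φ (u i) y) ≤ α) →
    ∃ s : ℝ, |s| ≤ η ∧ y = φ s x

section ReturnSequences

variable [MetricSpace X] {φ : ℝ → X → X} {N : ℕ} {S : Fin N → Set X} {η β α : ℝ}
  {x y : X} {q : ℤ → Fin N} {τ u : ℤ → ℝ}

theorem isClosed_setOf_isRetSeq (hφ : IsFlow X φ) (hS : ∀ i, IsClosed (S i)) :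
    IsClosed {p : X × (ℤ → Fin N) × (ℤ → ℝ) | IsRetSeq φ S β α p.1 p.2.1 p.2.2} := by
  have hmem : ∀ i,
      IsClosed {p : X × (ℤ → Fin N) × (ℤ → ℝ) | φ (p.2.2 i) p.1 ∈ S (p.2.1 i)} := by
    intro i
    have : {p : X × (ℤ → Fin N) × (ℤ → ℝ) | φ (p.2.2 i) p.1 ∈ S (p.2.1 i)} =
        ⋃ j, {p | p.2.1 i = j} ∩ (fun p => φ (p.2.2 i) p.1) ⁻¹' S j := by
      ext p; simp
    rw [this]
    exact isClosed_iUnion_of_finite fun j => (isClosed_eq (by fun_prop) continuous_const).inter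
      ((hS j).preimage (hφ.continuous_comp (by fun_prop) (by fun_prop)))
  simp only [IsRetSeq, ofPred_and, ofPred_forall]
  refine (isClosed_eq (by fun_prop) continuous_const).inter
    ((isClosed_iInter fun i => ?_).inter (isClosed_iInter hmem))
  exact (isClosed_le continuous_const (by fun_prop)).inter
    (isClosed_le (by fun_prop) continuous_const)

theorem IsRetSeq.unique_point [CompactSpace X] (hφ : IsFlow X φ)
    (hcs : ∀ i, IsCrossSection φ η (S i)) (hβ : 0 < β)
    (hdiam : ∀ i, Metric.diam (S i) ≤ α) (hα : IsExpansivityConstant φ η α)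
    (hx : IsRetSeq φ S β α x q τ) (hy : IsRetSeq φ S β α y q u) : y = x := by
  obtain ⟨hτ0, hτgap, hτmem⟩ := hx
  obtain ⟨hu0, hugap, humem⟩ := hy
  have hτ : ∀ i, β ≤ τ (i + 1) - τ i := fun i => (hτgap i).1
  obtain ⟨s, hs, rfl⟩ := hα τ u x y hτ0 hu0
    (fun i => ⟨hβ.trans_le (hτgap i).1, (hτgap i).2⟩)
    (fun i => abs_le.2 ⟨by linarith [hugap i], (hugap i).2⟩)
    ((tendsto_atTop_of_forall_le_sub_succ hβ hτ).comp tendsto_natCast_atTop_atTop)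
    ((tendsto_atBot_of_forall_le_sub_succ hβ hτ).comp
      (tendsto_neg_atTop_atBot.comp tendsto_natCast_atTop_atTop))
    (fun i => (Metric.dist_le_diam_of_mem Metric.isBounded_of_compactSpace (hτmem i)
      (humem i)).trans (hdiam _))
  have h0 : φ 0 x ∈ S (q 0) := hτ0 ▸ hτmem 0
  have hs0 : φ s x ∈ S (q 0) := by simpa [hu0, hφ.map_zero] using humem 0
  rw [← (hcs (q 0)).eq_of_mem hφ h0 hs0 (by simpa using hs), hφ.map_zero]

theorem IsRetSeq.unique_times (hφ : IsFlow X φ) (hcs : ∀ i, IsCrossSection φ η (S i))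
    (hβ : 0 < β) (hαη : α < η) (hτ : IsRetSeq φ S β α x q τ)
    (hu : IsRetSeq φ S β α x q u) : u = τ := by
  have hclose : ∀ i, |τ i - u i| ≤ α - β → u i = τ i := fun i h =>
    (hcs (q i)).eq_of_mem hφ (hu.2.2 i) (hτ.2.2 i) (by linarith)
  funext i
  induction i with
  | zero => rw [hu.1, hτ.1]
  | succ n ih =>
    have := hu.2.1 n
    have := hτ.2.1 n
    exact hclose _ (abs_le.2 ⟨by linarith, by linarith⟩)
  | pred n ih =>
    have := hu.2.1 (-n - 1)
    have := hτ.2.1 (-n - 1)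
    rw [sub_add_cancel] at *
    exact hclose _ (abs_le.2 ⟨by linarith, by linarith⟩)

end ReturnSequences

section ClosureOfItineraries

variable [MetricSpace X] {φ : ℝ → X → X} {N : ℕ} {S : Fin N → Set X} {η β α : ℝ}
  {x : X} {q : ℤ → Fin N} {τ : ℤ → ℝ}

theorem IsFlow.map_mem_Wset (hφ : IsFlow X φ) (hx : x ∈ Wset φ S η) (r : ℝ) :
    φ r x ∈ Wset φ S η := by
  simp only [Wset, mem_compl_iff, mem_iUnion, mem_image, not_exists, not_and] at hx ⊢
  intro s z hz hsz
  exact hx (-r + s) z hz (by rw [← hφ.map_map, hsz, hφ.map_neg_map])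

theorem IsFlow.mem_interior_of_mem_Wset (hφ : IsFlow X φ) (hx : x ∈ Wset φ S η) {k : Fin N}
    (hk : x ∈ S k) : x ∈ interior (flowSet φ (Icc (-(η / 2)) (η / 2)) (S k)) := by
  by_contra h
  exact hx (mem_iUnion.2 ⟨0, x, mem_iUnion.2 ⟨k, subset_closure hk, fun h' => h h'.1⟩,
    hφ.map_zero x⟩)

noncomputable def itineraryData (φ : ℝ → X → X) (S : Fin N → Set X) (hN : 0 < N) (x : X) :
    X × (ℤ → Fin N) × (ℤ → ℝ) :=
  (x, Qseq φ S hN x, fun i => retZ φ (⋃ k, S k) i x)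

theorem exists_isRetSeq_mem_closure [CompactSpace X] (hN : 0 < N) (hφ : IsFlow X φ)
    (hS : ∀ i, IsClosed (S i)) (hβ : 0 < β) (hβα : β ≤ α)
    (hH : ∀ x, IsDelone β α (hitTimes φ (⋃ k, S k) x))
    (hq : q ∈ closure (Qseq φ S hN '' Vset φ S η)) :
    ∃ x u, IsRetSeq φ S β α x q u ∧
      (x, q, u) ∈ closure (itineraryData φ S hN '' Vset φ S η) := by
  set A := itineraryData φ S hN '' Vset φ S η
  set K : Set (X × (ℤ → Fin N) × (ℤ → ℝ)) :=
    univ ×ˢ univ ×ˢ univ.pi fun i : ℤ => Icc (-(|(i : ℝ)| * α)) (|(i : ℝ)| * α)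
  have hK : IsCompact K :=
    isCompact_univ.prod (isCompact_univ.prod (isCompact_univ_pi fun _ => isCompact_Icc))
  have hAR : A ⊆ {p | IsRetSeq φ S β α p.1 p.2.1 p.2.2} := by
    rintro _ ⟨x, hx, rfl⟩
    exact hφ.isRetSeq_Qseq hN (hH x) hβ hx.2
  have hAK : A ⊆ K := by
    rintro _ ⟨x, hx, rfl⟩
    have h : IsRetSeq φ S β α x _ (itineraryData φ S hN x).2.2 :=
      hφ.isRetSeq_Qseq hN (hH x) hβ hx.2
    exact ⟨trivial, trivial, fun i _ => abs_le.1 (abs_le_mul_of_forall_abs_sub_succ_le h.1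
      (fun j => abs_le.2 ⟨by linarith [h.2.1 j], (h.2.1 j).2⟩) i)⟩
  have hAc : IsCompact (closure A) :=
    hK.of_isClosed_subset isClosed_closure (closure_minimal hAK hK.isClosed)
  have hQ : Qseq φ S hN '' Vset φ S η ⊆ (fun p => p.2.1) '' closure A := by
    rintro _ ⟨x, hx, rfl⟩
    exact ⟨itineraryData φ S hN x, subset_closure ⟨x, hx, rfl⟩, rfl⟩
  obtain ⟨⟨x, q', u⟩, hp, rfl⟩ := closure_minimal hQ (hAc.image (by fun_prop)).isClosed hq
  exact ⟨x, u, closure_minimal hAR (isClosed_setOf_isRetSeq hφ hS) hp, hp⟩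

/-- A hit of `T` at an interior point persists, at a nearby time, along nearby orbits. -/
theorem mem_range_of_tendsto [CompactSpace X] {G T : Set X} (hφ : IsFlow X φ)
    (hTc : IsClosed T) (hT : IsCrossSection φ η T) (hTG : T ⊆ G) {ι : Type*} {l : Filter ι}
    [l.NeBot] {y : ι → X} {ρ : ι → ℤ → ℝ} (hy : Tendsto y l (𝓝 x))
    (hρ : ∀ i, Tendsto (fun n => ρ n i) l (𝓝 (τ i))) (hρmono : ∀ n, StrictMono (ρ n))
    (hρhit : ∀ n, hitTimes φ G (y n) ⊆ range (ρ n)) (hβ : 0 < β)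
    (hτ : ∀ i, β ≤ τ (i + 1) - τ i) {s : ℝ} (hs : φ s x ∈ T)
    (hint : φ s x ∈ interior (flowSet φ (Icc (-(η / 2)) (η / 2)) T)) : s ∈ range τ := by
  obtain ⟨v, hv, hvT⟩ :=
    hT.exists_tendsto_zero_map_mem hφ hTc hs hint (hφ.tendsto_comp tendsto_const_nhds hy)
  obtain ⟨i, hi, hi'⟩ := exists_le_lt_succ_of_forall_le_sub_succ hβ hτ s
  rcases hi.eq_or_lt with h | h
  · exact ⟨i, h⟩
  have hsv : Tendsto (fun n => -v n + s) l (𝓝 s) := by simpa using hv.neg.add_const s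
  obtain ⟨n, hn, h1, h2⟩ :=
    (hvT.and (((hρ i).eventually_lt hsv h).and (hsv.eventually_lt (hρ (i + 1)) hi'))).exists
  obtain ⟨m, hm⟩ := hρhit n (show φ (-v n + s) (y n) ∈ G by
    rw [← hφ.map_map]; exact hTG hn)
  rw [← hm] at h1 h2
  have := (hρmono n).lt_iff_lt.1 h1
  have := (hρmono n).lt_iff_lt.1 h2
  omega

theorem range_eq_hitTimes_of_mem_closure [CompactSpace X] (hN : 0 < N) (hφ : IsFlow X φ)
    (hS : ∀ i, IsClosed (S i)) (hcs : ∀ i, IsCrossSection φ η (S i)) (hβ : 0 < β)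
    (hβα : β ≤ α) (hαη : α < η) (hdiam : ∀ i, Metric.diam (S i) ≤ α)
    (hα : IsExpansivityConstant φ η α) (hH : ∀ x, IsDelone β α (hitTimes φ (⋃ k, S k) x))
    (hq : q ∈ closure (Qseq φ S hN '' Vset φ S η)) (hτ : IsRetSeq φ S β α x q τ)
    (hxW : x ∈ Wset φ S η) : range τ = hitTimes φ (⋃ k, S k) x := by
  obtain ⟨x', u, hu, hmem⟩ := exists_isRetSeq_mem_closure hN hφ hS hβ hβα hH hq
  have hxx' : x = x' := hu.unique_point hφ hcs hβ hdiam hα hτ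
  subst hxx'
  have hτu : τ = u := hu.unique_times hφ hcs hβ hαη hτ
  subst hτu
  obtain ⟨w, hwA, hw⟩ := mem_closure_iff_seq_limit.1 hmem
  choose z hzV hz using hwA
  have hw' : Tendsto (fun n => itineraryData φ S hN (z n)) atTop (𝓝 (x, q, τ)) := by
    simpa only [hz] using hw
  refine Subset.antisymm (range_subset_iff.2 fun i => mem_iUnion.2 ⟨q i, hτ.2.2 i⟩)
    fun s hs => ?_
  obtain ⟨k, hk⟩ := mem_iUnion.1 hs
  exact mem_range_of_tendsto hφ (hS k) (hcs k) (subset_iUnion S k)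
    ((continuous_fst.tendsto _).comp hw')
    (fun i => ((continuous_apply i).tendsto _).comp
      (((continuous_snd.comp continuous_snd).tendsto _).comp hw'))
    (fun n => hφ.strictMono_retZ (hH _) hβ (hzV n).2)
    (fun n => (hφ.range_retZ (hH _) hβ (hzV n).2).ge)
    hβ (fun i => (hτ.2.1 i).1) hk (hφ.mem_interior_of_mem_Wset (hφ.map_mem_Wset hxW s) hk)

end ClosureOfItineraries

theorem exists_isRetSeq_of_fmap_pos {N : ℕ} [Nonempty X] {φ : ℝ → X → X}
    {S : Fin N → Set X} {β α : ℝ} {q : ℤ → Fin N} (h : 0 < fmap φ S β α q) :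
    ∃ τ, IsRetSeq φ S β α (Pmap φ S β α q) q τ ∧ fmap φ S β α q = τ 1 := by
  unfold fmap at h ⊢
  split_ifs at h ⊢ with hex
  · exact ⟨_, hex.choose_spec, rfl⟩
  · exact absurd h (lt_irrefl 0)

/-- If `(q,t) ∈ Λ_f` with `0 ≤ t < f(q)` and `π(q,t) = Φ_t(P(q)) = z ∈ V`,
then `t = 0` and `q = Q(z)`. -/
theorem pi_eq_mem_V
    {X : Type*} [MetricSpace X] [CompactSpace X] [Nonempty X]
    (φ : ℝ → X → X) (hφ : IsFlow X φ)
    {N : ℕ} (hN : 0 < N) (S : Fin N → Set X) (η β α : ℝ)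
    (hclosed : ∀ i, IsClosed (S i))
    (hdisj : Pairwise (Function.onFun Disjoint S))
    (hcs : ∀ i, IsCrossSection φ η (S i))
    (hβ : 0 < β) (hβα : β ≤ α) (hαη : α < η)
    (hdiam : ∀ i, Metric.diam (S i) ≤ α)
    (hα : ∀ (t u : ℤ → ℝ) (x y : X), t 0 = 0 → u 0 = 0 →
      (∀ i : ℤ, 0 < t (i + 1) - t i ∧ t (i + 1) - t i ≤ α) →
      (∀ i : ℤ, |u (i + 1) - u i| ≤ α) →
      Filter.Tendsto (fun n : ℕ => t (n : ℤ)) Filter.atTop Filter.atTop →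
      Filter.Tendsto (fun n : ℕ => t (-(n : ℤ))) Filter.atTop Filter.atBot →
      (∀ i : ℤ, dist (φ (t i) x) (φ (u i) y) ≤ α) →
      ∃ s : ℝ, |s| ≤ η ∧ y = φ s x)
    (hcov₁ : flowSet φ (Set.Icc 0 α) (⋃ i, S i) = Set.univ)
    (hcov₂ : flowSet φ (Set.Icc (-α) 0) (⋃ i, S i) = Set.univ)
    (hβdisj : Pairwise (Function.onFun Disjoint fun i => flowSet φ (Set.Icc 0 β) (S i))) :
    ∀ q ∈ closure (Qseq φ S hN '' Vset φ S η), ∀ t : ℝ,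
      0 ≤ t → t < fmap φ S β α q → ∀ z ∈ Vset φ S η,
      φ t (Pmap φ S β α q) = z → t = 0 ∧ q = Qseq φ S hN z := by
  intro q hq t ht0 htf z hzV hz
  have hH := hitTimes_isDelone hφ hcs hβα hαη hβdisj hcov₁ hcov₂
  obtain ⟨τ, hτ, hfτ⟩ := exists_isRetSeq_of_fmap_pos (ht0.trans_lt htf)
  have hxW : Pmap φ S β α q ∈ Wset φ S η := by
    simpa [← hz, hφ.map_neg_map] using hφ.map_mem_Wset hzV.1 (-t)
  have hrange :=
    range_eq_hitTimes_of_mem_closure hN hφ hclosed hcs hβ hβα hαη hdiam hα hH hq hτ hxW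
  have hmono : StrictMono τ := strictMono_int_of_lt_succ fun i => by linarith [(hτ.2.1 i).1]
  have hhit : t ∈ hitTimes φ (⋃ k, S k) (Pmap φ S β α q) := by
    rw [hitTimes, mem_ofPred_eq, hz]
    exact hzV.2
  obtain ⟨i, rfl⟩ : t ∈ range τ := hrange ▸ hhit
  obtain rfl : i = 0 := by
    have h0 : (0 : ℤ) ≤ i := hmono.le_iff_le.1 (hτ.1 ▸ ht0)
    have h1 : i < 1 := hmono.lt_iff_lt.1 (hfτ ▸ htf)
    omega
  rw [hτ.1, hφ.map_zero] at hz
  subst hz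
  have hret : (fun i => retZ φ (⋃ k, S k) i (Pmap φ S β α q)) = τ :=
    (hφ.strictMono_retZ (hH _) hβ hzV.2).eq_of_range_eq hmono
      (by rw [hφ.range_retZ (hH _) hβ hzV.2, hrange]) (by rw [retZ_zero, hτ.1])
  exact ⟨hτ.1, (Qseq_eq hN hdisj fun i => congrFun hret i ▸ hτ.2.2 i).symm⟩
end

section
/- Let (X,Φ) be a topological flow without fixed points. Then for every x ∈ X there exists a closed cross-section S such that x ∈ Int^Φ(S). -/
open Set Topology

variable {X : Type*}

/-- A fixed point of the flow. -/
def IsFixedPoint (φ : ℝ → X → X) (x : X) : Prop := ∀ t : ℝ, φ t x = x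

/-!
Pick `T > 0` with `φ_T x ≠ x` and let `L y = ∫₀ᵀ d(φ_s y, x) ds`. Then
`L (φ_b y) - L (φ_a y) = ∫ₐᵇ (d(φ_{s+T} y, x) - d(φ_s y, x)) ds`, and the integrand equals
`d(φ_T x, x) > 0` at `(y, s) = (x, 0)`. Hence `L` is strictly increasing along short orbit
segments through points near `x`, so a closed neighbourhood of `x` cut down to the level set
`{L = L x}` is a cross-section; by the intermediate value theorem every point near `x` flows into
it within a short time, which puts `x` in its flow interior.
-/

open Filter

namespace IsFlow

variable [TopologicalSpace X] {φ : ℝ → X → X}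

theorem continuous_apply (hφ : IsFlow X φ) (t : ℝ) : Continuous (φ t) :=
  hφ.cont.comp (continuous_id.prodMk continuous_const)

theorem continuous_orbit (hφ : IsFlow X φ) (y : X) : Continuous fun t => φ t y :=
  hφ.cont.comp (continuous_const.prodMk continuous_id)

theorem neg_apply_apply (hφ : IsFlow X φ) (t : ℝ) (y : X) : φ (-t) (φ t y) = y := by
  rw [← hφ.map_add, neg_add_cancel, hφ.map_zero]

theorem exists_pos_apply_ne {x : X} (hφ : IsFlow X φ) (hx : ¬ IsFixedPoint φ x) :
    ∃ T > 0, φ T x ≠ x := by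
  obtain ⟨t, ht⟩ := not_forall.1 hx
  rcases lt_trichotomy t 0 with h | rfl | h
  · refine ⟨-t, neg_pos.2 h, fun h' => ht ?_⟩
    simpa [h'] using hφ.neg_apply_apply (-t) x
  · exact absurd (hφ.map_zero x) ht
  · exact ⟨t, h, ht⟩

end IsFlow

theorem exists_pos_eventually_forall_Icc [TopologicalSpace X] {x : X}
    {p : X × ℝ → Prop} (h : ∀ᶠ q in 𝓝 (x, 0), p q) :
    ∃ δ > 0, ∀ᶠ y in 𝓝 x, ∀ s ∈ Icc (-δ) δ, p (y, s) := by
  rw [nhds_prod_eq, eventually_prod_iff] at h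
  obtain ⟨pa, hpa, pb, hpb, hp⟩ := h
  obtain ⟨ε, hε, hεb⟩ := Metric.eventually_nhds_iff.1 hpb
  refine ⟨ε / 2, half_pos hε, hpa.mono fun y hy s hs => hp hy (hεb ?_)⟩
  rw [Real.dist_eq, sub_zero, abs_lt]
  constructor <;> linarith [hs.1, hs.2]

theorem integral_window_sub_integral_window {f : ℝ → ℝ} (hf : Continuous f) (T a b : ℝ) :
    (∫ s in b..b + T, f s) - ∫ s in a..a + T, f s = ∫ s in a..b, (f (s + T) - f s) := by
  have hi : ∀ c d : ℝ, IntervalIntegrable f MeasureTheory.volume c d :=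
    fun c d => hf.intervalIntegrable c d
  have hiT : IntervalIntegrable (fun s => f (s + T)) MeasureTheory.volume a b :=
    (hf.comp (continuous_add_const T)).intervalIntegrable a b
  rw [intervalIntegral.integral_interval_sub_interval_comm (hi _ _) (hi _ _) (hi _ _),
    intervalIntegral.integral_sub hiT (hi a b),
    intervalIntegral.integral_comp_add_right, intervalIntegral.integral_symm a b,
    intervalIntegral.integral_symm (a + T) (b + T)]
  ring

theorem strictMonoOn_integral_window {f : ℝ → ℝ} (hf : Continuous f) {T u v : ℝ}
    (h : ∀ s ∈ Icc u v, f s < f (s + T)) :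
    StrictMonoOn (fun t => ∫ s in t..t + T, f s) (Icc u v) := by
  intro a ha b hb hab
  rw [← sub_pos, integral_window_sub_integral_window hf]
  refine intervalIntegral.intervalIntegral_pos_of_pos_on
    (((hf.comp (continuous_add_const T)).sub hf).intervalIntegrable a b) (fun s hs => ?_) hab
  exact sub_pos.2 (h s ⟨ha.1.trans hs.1.le, hs.2.le.trans hb.2⟩)

section OrbitDistIntegral

variable [MetricSpace X] {φ : ℝ → X → X}

noncomputable def orbitDistIntegral (φ : ℝ → X → X) (x : X) (T : ℝ) (y : X) : ℝ :=
  ∫ s in 0..T, dist (φ s y) x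

theorem continuous_orbitDistIntegral (hφ : IsFlow X φ) (x : X) (T : ℝ) :
    Continuous (orbitDistIntegral φ x T) :=
  intervalIntegral.continuous_parametric_intervalIntegral_of_continuous'
    (hφ.cont.dist continuous_const) 0 T

theorem orbitDistIntegral_apply (hφ : IsFlow X φ) (x : X) (T t : ℝ) (y : X) :
    orbitDistIntegral φ x T (φ t y) = ∫ s in t..t + T, dist (φ s y) x := by
  simp only [orbitDistIntegral, ← hφ.map_add]
  rw [intervalIntegral.integral_comp_add_right (fun s => dist (φ s y) x), zero_add, add_comm]

theorem exists_pos_eventually_strictMonoOn_orbitDistIntegral (hφ : IsFlow X φ) {x : X} {T : ℝ}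
    (hT : φ T x ≠ x) : ∃ δ > 0, ∀ᶠ y in 𝓝 x,
      StrictMonoOn (fun t => orbitDistIntegral φ x T (φ t y)) (Icc (-δ) δ) := by
  have hgap : ∀ᶠ q : X × ℝ in 𝓝 (x, 0), dist (φ q.2 q.1) x < dist (φ (q.2 + T) q.1) x := by
    refine ContinuousAt.eventually_lt (hφ.cont.dist continuous_const).continuousAt
      ((hφ.cont.comp (continuous_fst.prodMk (continuous_snd.add continuous_const))).dist
        continuous_const).continuousAt ?_
    simpa [hφ.map_zero] using hT
  obtain ⟨δ, hδ, hy⟩ := exists_pos_eventually_forall_Icc hgap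
  refine ⟨δ, hδ, hy.mono fun y hy => ?_⟩
  simp only [orbitDistIntegral_apply hφ]
  exact strictMonoOn_integral_window ((hφ.continuous_orbit y).dist continuous_const) hy

end OrbitDistIntegral

section CrossSection

variable [TopologicalSpace X] {φ : ℝ → X → X}

theorem isCrossSection_of_injOn (hφ : IsFlow X φ) {L : X → ℝ} {S : Set X} {η c : ℝ}
    (hη : 0 < η) (hS : S ⊆ L ⁻¹' {c})
    (hinj : ∀ y ∈ S, InjOn (fun t => L (φ t y)) (Icc (-(2 * η)) (2 * η))) :
    IsCrossSection φ η S := by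
  refine ⟨hη, ?_⟩
  rintro ⟨y₁, t₁⟩ ⟨hy₁, ht₁⟩ ⟨y₂, t₂⟩ ⟨hy₂, ht₂⟩ heq
  simp only at heq hy₁ hy₂ ht₁ ht₂
  have hy₂' : φ (t₁ - t₂) y₁ = y₂ := by
    rw [sub_eq_neg_add, hφ.map_add, heq, hφ.neg_apply_apply]
  have ht : t₁ - t₂ = 0 := by
    refine hinj y₁ hy₁ ⟨by linarith [ht₁.1, ht₂.2], by linarith [ht₁.2, ht₂.1]⟩
      ⟨by linarith, by linarith⟩ ?_
    simp only [hy₂', hφ.map_zero]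
    exact (hS hy₂).trans (hS hy₁).symm
  obtain rfl : t₁ = t₂ := sub_eq_zero.1 ht
  rw [sub_self, hφ.map_zero] at hy₂'
  rw [hy₂']

theorem mem_interior_flowSet (hφ : IsFlow X φ) {L : X → ℝ} (hL : Continuous L) {x : X}
    {γ : ℝ} (hγ : 0 ≤ γ) (hlo : L (φ (-γ) x) < L x) (hhi : L x < L (φ γ x)) {V : Set X}
    (hV : ∀ᶠ z in 𝓝 x, ∀ s ∈ Icc (-γ) γ, φ s z ∈ V) :
    x ∈ interior (flowSet φ (Icc (-γ) γ) (V ∩ L ⁻¹' {L x})) := by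
  have hlo' : ∀ᶠ z in 𝓝 x, L (φ (-γ) z) < L x :=
    (hL.comp (hφ.continuous_apply _)).continuousAt.eventually_lt continuousAt_const hlo
  have hhi' : ∀ᶠ z in 𝓝 x, L x < L (φ γ z) :=
    continuousAt_const.eventually_lt (hL.comp (hφ.continuous_apply _)).continuousAt hhi
  rw [mem_interior_iff_mem_nhds]
  filter_upwards [hlo', hhi', hV] with z hzlo hzhi hzV
  obtain ⟨s, hs, hLs⟩ := intermediate_value_Icc (by linarith) (hL.comp
    (hφ.continuous_orbit z)).continuousOn ⟨hzlo.le, hzhi.le⟩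
  exact ⟨-s, ⟨neg_le_neg hs.2, by linarith [hs.1]⟩, φ s z, ⟨hzV s hs, hLs⟩,
    hφ.neg_apply_apply s z⟩

end CrossSection

theorem exists_closed_crossSection_general
    {X : Type*} [MetricSpace X]
    (φ : ℝ → X → X) (hφ : IsFlow X φ)
    (hfix : ∀ x : X, ¬ IsFixedPoint φ x) :
    ∀ x : X, ∃ (η : ℝ) (S : Set X),
      IsClosed S ∧ IsCrossSection φ η S ∧ x ∈ flowInterior φ η S := by
  intro x
  obtain ⟨T, -, hT⟩ := hφ.exists_pos_apply_ne (hfix x)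
  set L := orbitDistIntegral φ x T
  have hL : Continuous L := continuous_orbitDistIntegral hφ x T
  obtain ⟨δ₁, hδ₁, hmono⟩ := exists_pos_eventually_strictMonoOn_orbitDistIntegral hφ hT
  obtain ⟨V, hVx, hVc, hVmono⟩ := exists_mem_nhds_isClosed_subset hmono
  have hxV : x ∈ V := mem_of_mem_nhds hVx
  obtain ⟨δ₂, hδ₂, hstay⟩ := exists_pos_eventually_forall_Icc (p := fun q => φ q.2 q.1 ∈ V)
    (hφ.cont.continuousAt.preimage_mem_nhds (by simpa [hφ.map_zero] using hVx))
  obtain ⟨η, hη, hη₁, hη₂⟩ : ∃ η > 0, 2 * η ≤ δ₁ ∧ 2 * η ≤ δ₂ :=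
    ⟨min δ₁ δ₂ / 2, by positivity, by linarith [min_le_left δ₁ δ₂],
      by linarith [min_le_right δ₁ δ₂]⟩
  have hmonoV : ∀ y ∈ V, StrictMonoOn (fun t => L (φ t y)) (Icc (-(2 * η)) (2 * η)) :=
    fun y hy => (hVmono hy).mono (Icc_subset_Icc (by linarith) (by linarith))
  have hmonox : StrictMonoOn (fun t => L (φ t x)) (Icc (-(η / 2)) (η / 2)) :=
    (hmonoV x hxV).mono (Icc_subset_Icc (by linarith) (by linarith))
  refine ⟨η, V ∩ L ⁻¹' {L x}, hVc.inter (isClosed_singleton.preimage hL),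
    isCrossSection_of_injOn hφ hη inter_subset_right fun y hy => (hmonoV y hy.1).injOn,
    ?_, hxV, rfl⟩
  refine mem_interior_flowSet hφ hL (by linarith) ?_ ?_
    (hstay.mono fun z hz s hs => hz s (Icc_subset_Icc (by linarith) (by linarith) hs))
  · simpa [hφ.map_zero] using hmonox ⟨le_rfl, by linarith⟩ ⟨by linarith, by linarith⟩
      (by linarith : -(η / 2) < 0)
  · simpa [hφ.map_zero] using hmonox ⟨by linarith, by linarith⟩ ⟨by linarith, le_rfl⟩
      (by linarith : 0 < η / 2)

/-- **Whitney.** In a topological flow without fixed points, every point lies in the flow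
interior of some closed cross-section. -/
theorem exists_closed_crossSection
    {X : Type*} [MetricSpace X] [CompactSpace X]
    (φ : ℝ → X → X) (hφ : IsFlow X φ)
    (hfix : ∀ x : X, ¬ IsFixedPoint φ x) :
    ∀ x : X, ∃ (η : ℝ) (S : Set X),
      IsClosed S ∧ IsCrossSection φ η S ∧ x ∈ flowInterior φ η S :=
  exists_closed_crossSection_general φ hφ hfix
end

section
/- Let (X,Φ) be a topological flow and let U be a subset of a closed cross-section S. If Int^Φ(U) = U, then U is relatively open in S. Conversely, if U ∩ ∂^Φ(S) = ∅ and U is relatively open in S, then Int^Φ(U) = U. -/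
open Set Topology

variable {X : Type*}

/-- `∂_S U`: the boundary of `U` in the subspace topology of `S`, as a subset of `X`. -/
def relBoundary [TopologicalSpace X] (S U : Set X) : Set X :=
  (fun y : S => (y : X)) '' frontier {y : S | (y : X) ∈ U}

/-- `Int_S U`: the interior of `U` in the subspace topology of `S`, as a subset of `X`. -/
def relInterior [TopologicalSpace X] (S U : Set X) : Set X :=
  (fun y : S => (y : X)) '' interior {y : S | (y : X) ∈ U}

/-!
A point of `S` reached from a point of `U ⊆ S` in time `|t| ≤ η` is that point itself (`t = 0`),
by injectivity on `S × [-η, η]`. Hence, with `γ = η/2`, `Int^Φ(U) = Int(Φ_{[-γ,γ]}(U)) ∩ S`,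
which gives the first implication. Conversely, if `U` is relatively open in the closed set `S`,
then `S \ U` is compact, so `K = Φ_{[-γ,γ]}(S \ U)` is closed and misses `U`; every `x ∈ U` lies
in `Int^Φ(S)`, and the open set `Int(Φ_{[-γ,γ]}(S)) \ K` around `x` lies in `Φ_{[-γ,γ]}(U)`.
-/

section

variable {φ : ℝ → X → X} {η : ℝ} {L : Set ℝ} {A S U : Set X}

theorem flowSet_eq_image (φ : ℝ → X → X) (L : Set ℝ) (A : Set X) :
    flowSet φ L A = (fun p : X × ℝ => φ p.2 p.1) '' (A ×ˢ L) := by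
  ext y
  constructor
  · rintro ⟨t, ht, x, hx, rfl⟩
    exact ⟨(x, t), ⟨hx, ht⟩, rfl⟩
  · rintro ⟨⟨x, t⟩, ⟨hx, ht⟩, rfl⟩
    exact ⟨t, ht, x, hx, rfl⟩

theorem flowSet_union (φ : ℝ → X → X) (L : Set ℝ) (A B : Set X) :
    flowSet φ L (A ∪ B) = flowSet φ L A ∪ flowSet φ L B := by
  simp only [flowSet_eq_image, union_prod, image_union]

variable [TopologicalSpace X]

theorem IsCompact.flowSet (hφ : IsFlow X φ) (hA : IsCompact A) (hL : IsCompact L) :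
    IsCompact (flowSet φ L A) := by
  rw [flowSet_eq_image]
  exact (hA.prod hL).image hφ.cont

theorem Icc_neg_half_subset_Icc_neg (hη : 0 ≤ η) : Icc (-(η / 2)) (η / 2) ⊆ Icc (-η) η :=
  Icc_subset_Icc (by linarith) (by linarith)

theorem IsCrossSection.flowSet_inter_subset (hφ : IsFlow X φ) (hcs : IsCrossSection φ η S)
    (hUS : U ⊆ S) (hL : L ⊆ Icc (-η) η) : flowSet φ L U ∩ S ⊆ U := by
  rintro y ⟨⟨t, ht, x, hxU, rfl⟩, hyS⟩
  have h0 : (0 : ℝ) ∈ Icc (-η) η := ⟨by linarith [hcs.1], hcs.1.le⟩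
  have hxt : (x, t) = (φ t x, 0) := hcs.2 ⟨hUS hxU, hL ht⟩ ⟨hyS, h0⟩ (by simp [hφ.map_zero])
  have hx : x = φ t x := congrArg Prod.fst hxt
  rwa [← hx]

theorem IsCrossSection.flowInterior_eq (hφ : IsFlow X φ) (hcs : IsCrossSection φ η S)
    (hUS : U ⊆ S) :
    flowInterior φ η U = interior (flowSet φ (Icc (-(η / 2)) (η / 2)) U) ∩ S :=
  Subset.antisymm (inter_subset_inter_right _ hUS) fun _ hy =>
    ⟨hy.1, hcs.flowSet_inter_subset hφ hUS (Icc_neg_half_subset_Icc_neg hcs.1.le)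
      ⟨interior_subset hy.1, hy.2⟩⟩

theorem IsCrossSection.isOpen_of_flowInterior_eq_self (hφ : IsFlow X φ)
    (hcs : IsCrossSection φ η S) (hUS : U ⊆ S) (hU : flowInterior φ η U = U) :
    IsOpen {y : S | (y : X) ∈ U} := by
  rw [← hU, hcs.flowInterior_eq hφ hUS]
  simp only [mem_inter_iff, Subtype.coe_prop, and_true]
  exact isOpen_interior.preimage continuous_subtype_val

theorem IsClosed.diff_of_isOpen_coe_preimage (hS : IsClosed S)
    (hU : IsOpen {y : S | (y : X) ∈ U}) : IsClosed (S \ U) := by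
  have := hS.isClosedMap_subtype_val (Subtype.val ⁻¹' Uᶜ) hU.isClosed_compl
  rwa [Subtype.image_preimage_coe] at this

theorem subset_flowInterior_of_inter_flowBoundary_eq_empty (hUS : U ⊆ S)
    (h : U ∩ flowBoundary φ η S = ∅) : U ⊆ flowInterior φ η S := fun x hx => by
  by_contra hx'
  exact h.subset ⟨hx, subset_closure (hUS hx), hx'⟩

theorem IsCrossSection.flowInterior_eq_self [T2Space X] [CompactSpace X] (hφ : IsFlow X φ)
    (hcs : IsCrossSection φ η S) (hS : IsClosed S) (hUS : U ⊆ S)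
    (hbd : U ∩ flowBoundary φ η S = ∅) (hU : IsOpen {y : S | (y : X) ∈ U}) :
    flowInterior φ η U = U := by
  set L := Icc (-(η / 2)) (η / 2)
  have hK : IsClosed (flowSet φ L (S \ U)) :=
    ((hS.diff_of_isOpen_coe_preimage hU).isCompact.flowSet hφ isCompact_Icc).isClosed
  have hcover : flowSet φ L S \ flowSet φ L (S \ U) ⊆ flowSet φ L U := by
    rw [sdiff_subset_iff, ← flowSet_union, sdiff_union_of_subset hUS]
  rw [flowInterior, inter_eq_right]
  intro x hx
  have hxK : x ∉ flowSet φ L (S \ U) := fun h =>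
    (hcs.flowSet_inter_subset hφ sdiff_subset (Icc_neg_half_subset_Icc_neg hcs.1.le)
      ⟨h, hUS hx⟩).2 hx
  refine interior_maximal ((sdiff_subset_sdiff_left interior_subset).trans hcover)
    (isOpen_interior.sdiff hK) ⟨?_, hxK⟩
  exact (subset_flowInterior_of_inter_flowBoundary_eq_empty hUS hbd hx).1

end

/-- If `Int^Φ(U) = U` then `U` is relatively open in the closed cross-section `S`;
conversely, if `U ∩ ∂^Φ(S) = ∅` and `U` is relatively open in `S`, then `Int^Φ(U) = U`. -/
theorem flowInterior_eq_iff_relOpen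
    {X : Type*} [MetricSpace X] [CompactSpace X]
    (φ : ℝ → X → X) (hφ : IsFlow X φ)
    (η : ℝ) (S : Set X) (hS : IsClosed S) (hcs : IsCrossSection φ η S)
    (U : Set X) (hUS : U ⊆ S) :
    (flowInterior φ η U = U → IsOpen {y : S | (y : X) ∈ U}) ∧
    (U ∩ flowBoundary φ η S = ∅ → IsOpen {y : S | (y : X) ∈ U} →
      flowInterior φ η U = U) :=
  ⟨hcs.isOpen_of_flowInterior_eq_self hφ hUS, hcs.flowInterior_eq_self hφ hS hUS⟩
end
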